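/- Fix integers b ≥ 2 and n ≥ 2. The bounds m_{b,n} and M_{b,n} are sharp: for c = m_{b,n} = b^n - b² + 3b - 3, the number a = b^n + (b - 1) satisfies b^n ≤ a < b^{n+1} and is a fixed point of S_{[c,b]}; and for c = M_{b,n} = b^{n+1} - b² - (n-1)(b-1)² + (b - ⌊b/2⌋)·⌊b/2⌋, the number a = (b-1)·(b² + b³ + ⋯ + b^n) + ⌊b/2⌋·b satisfies b^n ≤ a < b^{n+1} and is a fixed point of S_{[c,b]}. -/

import Mathlib

/-!
Everything rests on `digitSqSum b (d + b * y) = d ^ 2 + digitSqSum b y` for a digit `d < b`.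
The first witness `b ^ n + (b - 1)` has digits `b - 1, 0, …, 0, 1`, so `S c b` sends it to
`c + (b - 1) ^ 2 + 1`. The second equals `b ^ (n + 1) - b ^ 2 + ⌊b/2⌋ b`, with digits
`0, ⌊b/2⌋, b - 1, …, b - 1` (`n - 1` copies of `b - 1`), so it is sent to
`c + ⌊b/2⌋ ^ 2 + (n - 1) (b - 1) ^ 2`. Substituting `c = m_{b,n}`, resp. `c = M_{b,n}`,
returns the number itself.
-/

def S (c b a : ℕ) : ℕ := c + ((Nat.digits b a).map (· ^ 2)).sum

open Finset

def digitSqSum (b a : ℕ) : ℕ := ((Nat.digits b a).map (· ^ 2)).sum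

lemma S_eq_add_digitSqSum (c b a : ℕ) : S c b a = c + digitSqSum b a := rfl

lemma digitSqSum_add_base_mul {b d : ℕ} (hb : 1 < b) (hd : d < b) (y : ℕ) :
    digitSqSum b (d + b * y) = d ^ 2 + digitSqSum b y := by
  by_cases h : d = 0 ∧ y = 0
  · obtain ⟨rfl, rfl⟩ := h
    simp [digitSqSum]
  · rw [digitSqSum, Nat.digits_add b hb d y hd (by tauto)]
    simp [digitSqSum]

lemma digitSqSum_base_pow {b : ℕ} (hb : 1 < b) (k : ℕ) : digitSqSum b (b ^ k) = 1 := by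
  induction k with
  | zero => simp [digitSqSum, Nat.digits_of_lt b 1 one_ne_zero hb]
  | succ k ih =>
    simpa [pow_succ', ih] using digitSqSum_add_base_mul hb (by omega : 0 < b) (b ^ k)

lemma digitSqSum_base_pow_sub_one {b : ℕ} (hb : 1 < b) (k : ℕ) :
    digitSqSum b (b ^ k - 1) = k * (b - 1) ^ 2 := by
  induction k with
  | zero => simp [digitSqSum]
  | succ k ih =>
    have hpow : b ^ (k + 1) - 1 = (b - 1) + b * (b ^ k - 1) := by
      have := Nat.one_le_pow k b (by omega)
      zify [this, Nat.one_le_pow (k + 1) b (by omega), hb.le]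
      ring
    rw [hpow, digitSqSum_add_base_mul hb (by omega), ih]
    ring

lemma sub_one_mul_sum_Icc_two_pow {b : ℕ} (hb : 1 ≤ b) (n : ℕ) :
    (b - 1) * ∑ i ∈ Icc 2 n, b ^ i = b ^ 2 * (b ^ (n - 1) - 1) := by
  rw [← Ico_add_one_right_eq_Icc, sum_Ico_eq_sum_range, show n + 1 - 2 = n - 1 by omega]
  simp_rw [pow_add, ← mul_sum]
  rw [mul_left_comm, mul_comm (b - 1), geom_sum_mul_of_one_le hb]

lemma sharp_witness_m {b n c : ℕ} (hb : 2 ≤ b) (hn : 1 ≤ n)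
    (hc : (c : ℤ) = (b : ℤ) ^ n - (b : ℤ) ^ 2 + 3 * b - 3) :
    b ^ n ≤ b ^ n + (b - 1) ∧ b ^ n + (b - 1) < b ^ (n + 1) ∧
      S c b (b ^ n + (b - 1)) = b ^ n + (b - 1) := by
  obtain ⟨k, rfl⟩ : ∃ k, n = k + 1 := ⟨n - 1, by omega⟩
  have hpow : b ^ (k + 1) = b * b ^ k := pow_succ' b k
  refine ⟨Nat.le_add_right _ _, ?_, ?_⟩
  · have := Nat.le_self_pow (by omega : k + 1 ≠ 0) b
    calc b ^ (k + 1) + (b - 1) < 2 * b ^ (k + 1) := by omega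
      _ ≤ b * b ^ (k + 1) := Nat.mul_le_mul_right _ hb
      _ = b ^ (k + 1 + 1) := (pow_succ' b _).symm
  · rw [S_eq_add_digitSqSum, hpow, add_comm (b * _), digitSqSum_add_base_mul hb (by omega),
      digitSqSum_base_pow hb]
    zify [hb.trans' one_le_two] at hc ⊢
    rw [hc]
    ring

lemma sharp_witness_M {b n c : ℕ} (hb : 2 ≤ b) (hn : 1 ≤ n)
    (hc : (c : ℤ) = (b : ℤ) ^ (n + 1) - (b : ℤ) ^ 2 - ((n : ℤ) - 1) * ((b : ℤ) - 1) ^ 2 +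
      ((b : ℤ) - ((b / 2 : ℕ) : ℤ)) * ((b / 2 : ℕ) : ℤ)) :
    b ^ n ≤ (b - 1) * (∑ i ∈ Icc 2 n, b ^ i) + (b / 2) * b ∧
      (b - 1) * (∑ i ∈ Icc 2 n, b ^ i) + (b / 2) * b < b ^ (n + 1) ∧
      S c b ((b - 1) * (∑ i ∈ Icc 2 n, b ^ i) + (b / 2) * b) =
        (b - 1) * (∑ i ∈ Icc 2 n, b ^ i) + (b / 2) * b := by
  obtain ⟨k, rfl⟩ : ∃ k, n = k + 1 := ⟨n - 1, by omega⟩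
  rw [sub_one_mul_sum_Icc_two_pow (by omega), Nat.add_sub_cancel]
  obtain ⟨h, hh⟩ : ∃ h, b / 2 = h := ⟨_, rfl⟩
  obtain ⟨Y, hY⟩ : ∃ Y, b ^ k = Y + 1 :=
    ⟨b ^ k - 1, (Nat.sub_add_cancel (Nat.one_le_pow k b (by omega))).symm⟩
  have hpow : b ^ (k + 1) = b * (Y + 1) := by rw [pow_succ', hY]
  have hpow' : b ^ (k + 1 + 1) = b ^ 2 * (Y + 1) := by rw [pow_succ, hpow]; ring
  have hh1 : 1 ≤ h := by omega
  have hhb : h < b := by omega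
  simp only [hY, Nat.add_sub_cancel, hh, hpow, hpow'] at hc ⊢
  refine ⟨?_, ?_, ?_⟩
  · nlinarith
  · nlinarith
  · have hYsq : digitSqSum b Y = k * (b - 1) ^ 2 := by
      simpa [hY] using digitSqSum_base_pow_sub_one hb k
    have hdigits : b ^ 2 * Y + h * b = 0 + b * (h + b * Y) := by ring
    rw [S_eq_add_digitSqSum, hdigits, digitSqSum_add_base_mul hb (by omega),
      digitSqSum_add_base_mul hb hhb, hYsq]
    have hYz : (b : ℤ) ^ k = Y + 1 := by exact_mod_cast hY
    zify [hb.trans' one_le_two] at hc ⊢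
    rw [hc]
    linear_combination (b : ℤ) ^ 2 * hYz

theorem stmt_17 (b n : ℕ) (hb : 2 ≤ b) (hn : 2 ≤ n) (c₁ c₂ : ℕ)
    (hc₁ : (c₁ : ℤ) = (b : ℤ) ^ n - (b : ℤ) ^ 2 + 3 * b - 3)
    (hc₂ : (c₂ : ℤ) = (b : ℤ) ^ (n + 1) - (b : ℤ) ^ 2 - ((n : ℤ) - 1) * ((b : ℤ) - 1) ^ 2 +
      ((b : ℤ) - ((b / 2 : ℕ) : ℤ)) * ((b / 2 : ℕ) : ℤ)) :
    (b ^ n ≤ b ^ n + (b - 1) ∧ b ^ n + (b - 1) < b ^ (n + 1) ∧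
      S c₁ b (b ^ n + (b - 1)) = b ^ n + (b - 1)) ∧
    (b ^ n ≤ (b - 1) * (∑ i ∈ Finset.Icc 2 n, b ^ i) + (b / 2) * b ∧
      (b - 1) * (∑ i ∈ Finset.Icc 2 n, b ^ i) + (b / 2) * b < b ^ (n + 1) ∧
      S c₂ b ((b - 1) * (∑ i ∈ Finset.Icc 2 n, b ^ i) + (b / 2) * b) =
        (b - 1) * (∑ i ∈ Finset.Icc 2 n, b ^ i) + (b / 2) * b) :=
  ⟨sharp_witness_m hb (by omega) hc₁, sharp_witness_M hb (by omega) hc₂⟩
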